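/- arXiv:1607.05081 — 2 statements merged into one kernel-verified Lean document; each statement's English description precedes it below -/
import Mathlib

section
/- Let N ≥ 2 and let c_1, …, c_N ∈ ℂ be the coefficients of the monic polynomial P_N(z) = z^N + Σ_{m=1}^N c_m z^{N−m}. Let y_1, …, y_N : ℝ → ℂ be functions differentiable at every t ∈ [0,1], pairwise distinct there (y_n(t) ≠ y_ℓ(t) for n ≠ ℓ and all t ∈ [0,1]), and set γ_m(0) = (−1)^m Σ_{N ≥ n_1 > n_2 > … > n_m ≥ 1} y_{n_1}(0) y_{n_2}(0) ⋯ y_{n_m}(0) for m = 1, …, N. Suppose that for every n ∈ {1, …, N} and every t ∈ [0,1] the differential equations ẏ_n(t) = −(∏_{ℓ=1, ℓ≠n}^{N} (y_n(t) − y_ℓ(t)))^{−1} · Σ_{m=1}^{N} (c_m − γ_m(0)) · y_n(t)^{N−m} hold. Then for every z ∈ ℂ one has ∏_{n=1}^{N} (z − y_n(1)) = z^N + Σ_{m=1}^{N} c_m z^{N−m}; that is, the values y_1(1), …, y_N(1) are exactly the N zeros of P_N. -/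
open Finset Polynomial

/-!
The flow is built so that the monic polynomial `P_t(z) = ∏ₙ (z - yₙ(t))` moves with constant
velocity. By the product rule `d/dt P_t(z) = ∑ₙ (-ẏₙ) ∏_{ℓ ≠ n} (z - y_ℓ)`, and with the given
`ẏₙ` this is the Lagrange interpolation formula at the distinct nodes `yₙ(t)` for the polynomial
`Q(z) = ∑ₘ (cₘ - γₘ(0)) z^{N-1-m}` of degree `< N`, hence equals `Q(z)`. So `P_1 = P_0 + Q`,
and `P_0(z) = z^N + ∑ₘ γₘ(0) z^{N-1-m}` by Vieta's formulas.
-/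

theorem Lagrange.eval_eq_sum_prod_sub_mul_inv {F ι : Type*} [Field F] [DecidableEq ι]
    {s : Finset ι} {v : ι → F} (hvs : Set.InjOn v s) {q : F[X]} (hq : q.degree < #s) (z : F) :
    q.eval z = ∑ i ∈ s, (∏ j ∈ s.erase i, (z - v j)) *
      ((∏ j ∈ s.erase i, (v i - v j))⁻¹ * q.eval (v i)) := by
  conv_lhs => rw [Lagrange.eq_interpolate hvs hq, Lagrange.interpolate_apply]
  simp only [eval_finsetSum, eval_mul, eval_C, Lagrange.basis, Lagrange.basisDivisor, eval_prod,
    eval_sub, eval_X, prod_mul_distrib, prod_inv_distrib]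
  exact sum_congr rfl fun i _ => by ring

theorem Polynomial.degree_sum_fin_C_mul_X_pow_lt {R : Type*} [Semiring R] {N : ℕ} (a : Fin N → R) :
    (∑ m : Fin N, C (a m) * X ^ (N - 1 - m.1)).degree < (N : WithBot ℕ) := by
  refine (degree_sum_le _ _).trans_lt ?_
  refine (Finset.sup_lt_iff (WithBot.bot_lt_coe N)).2 fun m _ => ?_
  exact (degree_C_mul_X_pow_le _ _).trans_lt (Nat.cast_lt.2 (by omega))

theorem Finset.prod_sub_eq_pow_add_sum_powersetCard {R : Type*} [CommRing R] {N : ℕ}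
    (w : Fin N → R) (z : R) :
    ∏ n : Fin N, (z - w n) = z ^ N +
      ∑ m : Fin N, ((-1) ^ (m.1 + 1) * ∑ s ∈ powersetCard (m.1 + 1) univ, ∏ i ∈ s, w i) *
        z ^ (N - 1 - m.1) := by
  have hterm : ∀ k, ∀ s ∈ powersetCard k (univ : Finset (Fin N)),
      (∏ i ∈ s, -w i) * ∏ _i ∈ univ \ s, z = ((-1) ^ k * ∏ i ∈ s, w i) * z ^ (N - k) := by
    intro k s hs
    obtain ⟨-, hcard⟩ := mem_powersetCard.mp hs
    rw [prod_const, card_univ_sdiff, Fintype.card_fin, hcard, ← hcard, ← prod_const,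
      ← prod_mul_distrib]
    simp only [neg_one_mul]
  simp only [sub_eq_neg_add, prod_add, sum_powerset, card_univ, Fintype.card_fin,
    fun k => sum_congr rfl (hterm k), ← sum_mul, ← mul_sum, sum_range fun k => _, Fin.sum_univ_succ]
  simp [Nat.sub_sub, add_comm 1]

theorem eq_add_smul_of_forall_hasDerivAt_eq {E : Type*} [NormedAddCommGroup E]
    [NormedSpace ℝ E] {f : ℝ → E} {c : E} {a b : ℝ} (hab : a ≤ b)
    (hf : ∀ t ∈ Set.Icc a b, HasDerivAt f c t) : f b = f a + (b - a) • c := by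
  have hline : ∀ t : ℝ, HasDerivAt (fun t => f a + (t - a) • c) c t := fun t => by
    simpa using (((hasDerivAt_id t).sub_const a).smul_const c).const_add (f a)
  refine eq_of_has_deriv_right_eq (f' := fun _ => c)
    (fun t ht => (hf t (Set.mem_Icc_of_Ico ht)).hasDerivWithinAt)
    (fun t _ => (hline t).hasDerivWithinAt)
    (fun t ht => (hf t ht).continuousAt.continuousWithinAt)
    (fun t _ => (hline t).continuousAt.continuousWithinAt) (by simp) b ⟨hab, le_rfl⟩

theorem hasDerivAt_prod_sub_of_hasDerivAt_eq_eval {𝕜 𝔽 ι : Type*} [NontriviallyNormedField 𝕜]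
    [NormedField 𝔽] [NormedAlgebra 𝕜 𝔽] [Fintype ι] [DecidableEq ι] {y : ι → 𝕜 → 𝔽}
    {q : 𝔽[X]} (hq : q.degree < Fintype.card ι) {t : 𝕜}
    (hinj : Function.Injective fun n => y n t)
    (hy : ∀ n, HasDerivAt (y n) (-(∏ ℓ ∈ univ.erase n, (y n t - y ℓ t))⁻¹ * q.eval (y n t)) t)
    (z : 𝔽) : HasDerivAt (fun s => ∏ n, (z - y n s)) (q.eval z) t := by
  convert HasDerivAt.fun_finsetProd fun n _ => (hy n).const_sub z using 1
  rw [Lagrange.eval_eq_sum_prod_sub_mul_inv hinj.injOn hq z]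
  simp only [smul_eq_mul, neg_mul, neg_neg]

theorem statement0_general (N : ℕ) (c : Fin N → ℂ)
    (y : Fin N → ℝ → ℂ)
    (hdist : ∀ t ∈ Set.Icc (0 : ℝ) 1, ∀ n ℓ : Fin N, n ≠ ℓ → y n t ≠ y ℓ t)
    (γ0 : Fin N → ℂ)
    (hγ0 : ∀ m : Fin N, γ0 m = (-1 : ℂ) ^ (m.1 + 1) *
      ∑ s ∈ Finset.powersetCard (m.1 + 1) (Finset.univ : Finset (Fin N)),
        ∏ i ∈ s, y i 0)
    (hode : ∀ n : Fin N, ∀ t ∈ Set.Icc (0 : ℝ) 1,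
      HasDerivAt (y n)
        (-(∏ ℓ ∈ Finset.univ.erase n, (y n t - y ℓ t))⁻¹ *
          ∑ m : Fin N, (c m - γ0 m) * (y n t) ^ (N - 1 - m.1)) t) :
    ∀ z : ℂ, ∏ n : Fin N, (z - y n 1) =
      z ^ N + ∑ m : Fin N, c m * z ^ (N - 1 - m.1) := by
  intro z
  set q : ℂ[X] := ∑ m : Fin N, C (c m - γ0 m) * X ^ (N - 1 - m.1)
  have hq_eval (w : ℂ) : q.eval w = ∑ m : Fin N, (c m - γ0 m) * w ^ (N - 1 - m.1) := by
    simp [q, eval_finsetSum]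
  have hflow (t : ℝ) (ht : t ∈ Set.Icc 0 1) :
      HasDerivAt (fun s => ∏ n, (z - y n s)) (q.eval z) t :=
    hasDerivAt_prod_sub_of_hasDerivAt_eq_eval
      (by simpa only [Fintype.card_fin] using degree_sum_fin_C_mul_X_pow_lt fun m => c m - γ0 m)
      (fun n ℓ h => by_contra fun hne => hdist t ht n ℓ hne h)
      (fun n => by simpa only [hq_eval] using hode n t ht) z
  rw [eq_add_smul_of_forall_hasDerivAt_eq zero_le_one hflow, prod_sub_eq_pow_add_sum_powersetCard,
    hq_eval]
  simp only [← hγ0, sub_zero, one_smul, add_assoc, ← sum_add_distrib, ← add_mul, add_sub_cancel]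

/-- If the zeros `y n` evolve according to the differential algorithm
`ẏ_n(t) = −(∏_{ℓ≠n}(y_n−y_ℓ))⁻¹ · Σ_m (c_m − γ_m(0)) y_n^{N−m}` on `[0,1]`,
staying pairwise distinct, then `y_1(1), …, y_N(1)` are exactly the zeros of
`P_N(z) = z^N + Σ_{m=1}^N c_m z^{N−m}`.  Here the index `m : Fin N` corresponds to
the paper's index `m+1 ∈ {1,…,N}`, so the power is `N−1−m` and the sign `(−1)^(m+1)`. -/
theorem statement0 (N : ℕ) (hN : 2 ≤ N) (c : Fin N → ℂ)
    (y : Fin N → ℝ → ℂ)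
    (hdist : ∀ t ∈ Set.Icc (0 : ℝ) 1, ∀ n ℓ : Fin N, n ≠ ℓ → y n t ≠ y ℓ t)
    (γ0 : Fin N → ℂ)
    (hγ0 : ∀ m : Fin N, γ0 m = (-1 : ℂ) ^ (m.1 + 1) *
      ∑ s ∈ Finset.powersetCard (m.1 + 1) (Finset.univ : Finset (Fin N)),
        ∏ i ∈ s, y i 0)
    (hode : ∀ n : Fin N, ∀ t ∈ Set.Icc (0 : ℝ) 1,
      HasDerivAt (y n)
        (-(∏ ℓ ∈ Finset.univ.erase n, (y n t - y ℓ t))⁻¹ *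
          ∑ m : Fin N, (c m - γ0 m) * (y n t) ^ (N - 1 - m.1)) t) :
    ∀ z : ℂ, ∏ n : Fin N, (z - y n 1) =
      z ^ N + ∑ m : Fin N, c m * z ^ (N - 1 - m.1) :=
  statement0_general N c y hdist γ0 hγ0 hode
end

section
/- Let N ≥ 2 and let c_1, …, c_N ∈ ℂ. Let y_1, …, y_N : ℝ → ℂ be functions differentiable at every t ∈ [0,1] and pairwise distinct on [0,1] (y_n(t) ≠ y_ℓ(t) for n ≠ ℓ, t ∈ [0,1]). For each m ∈ {1, …, N} and t ∈ [0,1], define γ_m(t) = (−1)^m Σ_{N ≥ n_1 > n_2 > … > n_m ≥ 1} y_{n_1}(t) y_{n_2}(t) ⋯ y_{n_m}(t), so that z^N + Σ_{m=1}^N γ_m(t) z^{N−m} = ∏_{n=1}^N (z − y_n(t)) for all z ∈ ℂ. Suppose that for every n and every t ∈ [0,1] the differential equations ẏ_n(t) = −(∏_{ℓ≠n} (y_n(t) − y_ℓ(t)))^{−1} · Σ_{m=1}^{N} (c_m − γ_m(0)) · y_n(t)^{N−m} hold. Then for every m ∈ {1, …, N} and every t ∈ [0,1], γ_m(t) = γ_m(0)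 + (c_m − γ_m(0)) t; in particular γ_m(1) = c_m. -/
/-!
Since `∏ₙ (z - yₙ) = z^N + Σₘ γₘ z^(N-m)`, differentiating in `t` gives
`Σₘ γ̇ₘ z^(N-m) = -Σₙ ẏₙ ∏_{ℓ≠n} (z - y_ℓ)`. The differential equation makes the right-hand side
the Lagrange interpolant, at the distinct nodes `yₙ(t)`, of `Q(z) = Σₘ (cₘ - γₘ(0)) z^(N-m)`;
as `deg Q < N` it is `Q` itself. Hence `γ̇ₘ = cₘ - γₘ(0)` is constant on `[0, 1]`.
-/

open Finset Polynomial

theorem sum_powersetCard_succ_sum_erase {α M : Type*} [DecidableEq α] [AddCommMonoid M]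
    (u : Finset α) (k : ℕ) (g : α → Finset α → M) :
    ∑ s ∈ powersetCard (k + 1) u, ∑ i ∈ s, g i (s.erase i) =
      ∑ i ∈ u, ∑ s ∈ powersetCard k (u.erase i), g i s := by
  rw [sum_sigma', sum_sigma']
  refine sum_bij' (fun p _ => ⟨p.2, p.1.erase p.2⟩) (fun p _ => ⟨insert p.1 p.2, p.1⟩)
    ?_ ?_ ?_ ?_ (fun _ _ => rfl)
  · rintro ⟨s, i⟩ hp
    simp only [mem_sigma, mem_powersetCard] at hp ⊢
    exact ⟨hp.1.1 hp.2, erase_subset_erase _ hp.1.1, by rw [card_erase_of_mem hp.2, hp.1.2]; rfl⟩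
  · rintro ⟨i, s⟩ hp
    simp only [mem_sigma, mem_powersetCard, subset_erase] at hp ⊢
    exact ⟨⟨insert_subset hp.1 hp.2.1.1, by rw [card_insert_of_notMem hp.2.1.2, hp.2.2]⟩,
      mem_insert_self _ _⟩
  · rintro ⟨s, i⟩ hp
    simp [insert_erase (mem_sigma.mp hp).2]
  · rintro ⟨i, s⟩ hp
    simp only [mem_sigma, mem_powersetCard, subset_erase] at hp
    simp [erase_insert hp.2.1.2]

theorem HasDerivAt.sum_powersetCard_prod {𝕜 𝔸 ι : Type*} [NontriviallyNormedField 𝕜]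
    [NormedCommRing 𝔸] [NormedAlgebra 𝕜 𝔸] [DecidableEq ι] {u : Finset ι}
    {y : ι → 𝕜 → 𝔸} {y' : ι → 𝔸} {t : 𝕜} (hy : ∀ i ∈ u, HasDerivAt (y i) (y' i) t) (k : ℕ) :
    HasDerivAt (fun t => ∑ s ∈ powersetCard (k + 1) u, ∏ i ∈ s, y i t)
      (∑ i ∈ u, y' i * ∑ s ∈ powersetCard k (u.erase i), ∏ j ∈ s, y j t) t := by
  refine (HasDerivAt.fun_sum fun s (hs : s ∈ powersetCard (k + 1) u) =>
    HasDerivAt.fun_finsetProd fun i hi => hy i ((mem_powersetCard.mp hs).1 hi)).congr_deriv ?_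
  simp only [smul_eq_mul]
  rw [sum_powersetCard_succ_sum_erase u k fun i s => (∏ j ∈ s, y j t) * y' i]
  simp only [mul_sum, mul_comm]

theorem Lagrange.coeff_nodal {R ι : Type*} [CommRing R] (s : Finset ι) (v : ι → R) {k : ℕ}
    (hk : k ≤ #s) :
    (nodal s v).coeff (#s - k) = (-1) ^ k * ∑ t ∈ powersetCard k s, ∏ j ∈ t, v j := by
  have h := prod_X_add_C_coeff s (fun j => -v j) (Nat.sub_le #s k)
  simp only [C_neg, ← sub_eq_add_neg, Nat.sub_sub_self hk, prod_neg] at h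
  rw [nodal, h, mul_sum]
  exact sum_congr rfl fun t ht => by rw [(mem_powersetCard.mp ht).2]

theorem Lagrange.sum_C_mul_nodalWeight_mul_nodal_erase {F ι : Type*} [Field F] [DecidableEq ι]
    {s : Finset ι} {v : ι → F} (hvs : Set.InjOn v s) {f : F[X]} (hf : f.degree < #s) :
    ∑ i ∈ s, C (f.eval (v i) * nodalWeight s v i) * nodal (s.erase i) v = f := by
  conv_rhs => rw [eq_interpolate hvs hf, interpolate_apply]
  refine sum_congr rfl fun i _ => ?_
  simp only [Lagrange.basis, basisDivisor, prod_mul_distrib, nodalWeight, nodal, map_mul,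
    map_prod, mul_assoc]

theorem Lagrange.coeff_eq_sum_eval_mul_nodalWeight_mul_esymm {F ι : Type*} [Field F]
    [DecidableEq ι] {s : Finset ι} {v : ι → F} (hvs : Set.InjOn v s) {f : F[X]}
    (hf : f.degree < #s) {k : ℕ} (hk : k < #s) :
    f.coeff (#s - 1 - k) = (-1) ^ k * ∑ i ∈ s,
      f.eval (v i) * nodalWeight s v i * ∑ t ∈ powersetCard k (s.erase i), ∏ j ∈ t, v j := by
  conv_lhs => rw [← sum_C_mul_nodalWeight_mul_nodal_erase hvs hf]
  rw [finsetSum_coeff, mul_sum]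
  refine sum_congr rfl fun i hi => ?_
  have hcard : #(s.erase i) = #s - 1 := card_erase_of_mem hi
  rw [coeff_C_mul, ← hcard, coeff_nodal _ _ (by omega)]
  ring

theorem Polynomial.degree_sum_C_mul_X_pow_sub_lt {R : Type*} [Semiring R] {N : ℕ}
    (b : Fin N → R) : (∑ k : Fin N, C (b k) * X ^ (N - 1 - k.1)).degree < (N : WithBot ℕ) :=
  (degree_sum_le _ _).trans_lt <| (Finset.sup_lt_iff <| WithBot.bot_lt_coe N).2 fun k _ =>
    (degree_C_mul_X_pow_le _ _).trans_lt <|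
      WithBot.coe_lt_coe.2 (by simp only [Nat.cast_id]; omega)

theorem Polynomial.coeff_sum_C_mul_X_pow_sub {R : Type*} [Semiring R] {N : ℕ}
    (b : Fin N → R) (m : Fin N) :
    (∑ k : Fin N, C (b k) * X ^ (N - 1 - k.1)).coeff (N - 1 - m) = b m := by
  rw [finsetSum_coeff, sum_eq_single m]
  · simp
  · intro k _ hk
    rw [coeff_C_mul_X_pow, if_neg]
    omega
  · simp

theorem neg_one_pow_succ_mul_sum_velocity_mul_esymm_erase {F : Type*} [Field F] {N : ℕ}
    {a : Fin N → F} (ha : Function.Injective a) (b : Fin N → F) (m : Fin N) :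
    (-1) ^ (m.1 + 1) * ∑ i, (-(∏ j ∈ univ.erase i, (a i - a j))⁻¹ *
      ∑ k, b k * a i ^ (N - 1 - k.1)) * ∑ s ∈ powersetCard m.1 (univ.erase i), ∏ j ∈ s, a j =
      b m := by
  have hdeg : (∑ k : Fin N, C (b k) * X ^ (N - 1 - k.1)).degree <
      ((#(univ : Finset (Fin N)) : ℕ) : WithBot ℕ) := by
    simpa using degree_sum_C_mul_X_pow_sub_lt b
  have h := Lagrange.coeff_eq_sum_eval_mul_nodalWeight_mul_esymm ha.injOn hdeg
    (k := m.1) (by simp)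
  simp only [card_univ, Fintype.card_fin, coeff_sum_C_mul_X_pow_sub, eval_finsetSum, eval_mul,
    eval_C, eval_pow, eval_X, Lagrange.nodalWeight, prod_inv_distrib] at h
  rw [h, pow_succ, mul_sum, mul_sum]
  refine sum_congr rfl fun i _ => ?_
  ring

theorem eq_add_smul_of_hasDerivAt_const {E : Type*} [NormedAddCommGroup E] [NormedSpace ℝ E]
    {f : ℝ → E} {c : E} {a b : ℝ} (hf : ∀ t ∈ Set.Icc a b, HasDerivAt f c t) :
    ∀ t ∈ Set.Icc a b, f t = f a + (t - a) • c := by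
  refine eq_of_has_deriv_right_eq (f' := fun _ => c)
    (fun t ht => (hf t (Set.Ico_subset_Icc_self ht)).hasDerivWithinAt) (fun t _ => ?_)
    (fun t ht => (hf t ht).continuousAt.continuousWithinAt) (by fun_prop) (by simp)
  simpa using (((hasDerivAt_id t).sub_const a).smul_const c).const_add (f a) |>.hasDerivWithinAt

theorem statement3_general (N : ℕ) (c : Fin N → ℂ)
    (y : Fin N → ℝ → ℂ)
    (hdist : ∀ t ∈ Set.Icc (0 : ℝ) 1, ∀ n ℓ : Fin N, n ≠ ℓ → y n t ≠ y ℓ t)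
    (γ : Fin N → ℝ → ℂ)
    (hγ : ∀ m : Fin N, ∀ t : ℝ, γ m t = (-1 : ℂ) ^ (m.1 + 1) *
      ∑ s ∈ Finset.powersetCard (m.1 + 1) (Finset.univ : Finset (Fin N)),
        ∏ i ∈ s, y i t)
    (hode : ∀ n : Fin N, ∀ t ∈ Set.Icc (0 : ℝ) 1,
      HasDerivAt (y n)
        (-(∏ ℓ ∈ Finset.univ.erase n, (y n t - y ℓ t))⁻¹ *
          ∑ m : Fin N, (c m - γ m 0) * (y n t) ^ (N - 1 - m.1)) t) :
    (∀ m : Fin N, ∀ t ∈ Set.Icc (0 : ℝ) 1,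
      γ m t = γ m 0 + (c m - γ m 0) * (t : ℂ)) ∧
    (∀ m : Fin N, γ m 1 = c m) := by
  have hderiv : ∀ m : Fin N, ∀ t ∈ Set.Icc (0 : ℝ) 1, HasDerivAt (γ m) (c m - γ m 0) t := by
    intro m t ht
    have h := (HasDerivAt.sum_powersetCard_prod (u := univ) (fun n _ => hode n t ht)
      m.1).const_mul ((-1 : ℂ) ^ (m.1 + 1))
    rw [neg_one_pow_succ_mul_sum_velocity_mul_esymm_erase (a := fun n => y n t)
      (fun n ℓ h => by_contra fun hne => hdist t ht n ℓ hne h)] at h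
    exact h.congr_of_eventuallyEq (Filter.Eventually.of_forall (hγ m))
  have haffine : ∀ m : Fin N, ∀ t ∈ Set.Icc (0 : ℝ) 1,
      γ m t = γ m 0 + (c m - γ m 0) * (t : ℂ) := fun m t ht => by
    simpa [Complex.real_smul, mul_comm] using eq_add_smul_of_hasDerivAt_const (hderiv m) t ht
  refine ⟨haffine, fun m => ?_⟩
  simpa using haffine m 1 (Set.right_mem_Icc.2 zero_le_one)

/-- Under the differential algorithm
`ẏ_n(t) = −(∏_{ℓ≠n}(y_n−y_ℓ))⁻¹ · Σ_m (c_m − γ_m(0)) y_n^{N−m}` on `[0,1]`, the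
coefficients `γ_m(t) = (−1)^m e_m(y(t))` of the monic polynomial with zeros `y_n(t)`
evolve linearly: `γ_m(t) = γ_m(0) + (c_m − γ_m(0)) t`; in particular `γ_m(1) = c_m`.
The index `m : Fin N` corresponds to the paper's `m+1 ∈ {1,…,N}`. -/
theorem statement3 (N : ℕ) (hN : 2 ≤ N) (c : Fin N → ℂ)
    (y : Fin N → ℝ → ℂ)
    (hdiff : ∀ n : Fin N, ∀ t ∈ Set.Icc (0 : ℝ) 1, DifferentiableAt ℝ (y n) t)
    (hdist : ∀ t ∈ Set.Icc (0 : ℝ) 1, ∀ n ℓ : Fin N, n ≠ ℓ → y n t ≠ y ℓ t)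
    (γ : Fin N → ℝ → ℂ)
    (hγ : ∀ m : Fin N, ∀ t : ℝ, γ m t = (-1 : ℂ) ^ (m.1 + 1) *
      ∑ s ∈ Finset.powersetCard (m.1 + 1) (Finset.univ : Finset (Fin N)),
        ∏ i ∈ s, y i t)
    (hfact : ∀ t ∈ Set.Icc (0 : ℝ) 1, ∀ z : ℂ,
      z ^ N + ∑ m : Fin N, γ m t * z ^ (N - 1 - m.1) =
        ∏ n : Fin N, (z - y n t))
    (hode : ∀ n : Fin N, ∀ t ∈ Set.Icc (0 : ℝ) 1,
      HasDerivAt (y n)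
        (-(∏ ℓ ∈ Finset.univ.erase n, (y n t - y ℓ t))⁻¹ *
          ∑ m : Fin N, (c m - γ m 0) * (y n t) ^ (N - 1 - m.1)) t) :
    (∀ m : Fin N, ∀ t ∈ Set.Icc (0 : ℝ) 1,
      γ m t = γ m 0 + (c m - γ m 0) * (t : ℂ)) ∧
    (∀ m : Fin N, γ m 1 = c m) :=
  statement3_general N c y hdist γ hγ hode
end
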